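/- arXiv:1806.03319 — 2 statements merged into one kernel-verified Lean document; each statement's English description precedes it below -/
import Mathlib

section
/- Let G be a finite set of chords on [1, 2n] such that every position in [1, 2n] is an endpoint of exactly one chord (a perfect matching). Decompose G into association classes (components) under the crossing relation. For each component C, let its trace I_C be the set of endpoints of chords in C. Then for any two distinct components C₁ and C₂, their traces are non-crossing: there do not exist positions a < b < c < d with a, c ∈ I_{C₁} and b, d ∈ I_{C₂}. -/
def ChordCross (c₁ c₂ : ℕ × ℕ) : Prop :=
  (c₁.1 < c₂.1 ∧ c₂.1 < c₁.2 ∧ c₁.2 < c₂.2) ∨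
  (c₂.1 < c₁.1 ∧ c₁.1 < c₂.2 ∧ c₂.2 < c₁.2)

/-- Association within `G`: reflexive-transitive closure of the crossing
relation, along chords of `G`. -/
def Assoc (G : Finset (ℕ × ℕ)) (c₁ c₂ : ℕ × ℕ) : Prop :=
  Relation.ReflTransGen (fun x y => y ∈ G ∧ ChordCross x y) c₁ c₂

lemma chordCross_symm {c₁ c₂ : ℕ × ℕ} (h : ChordCross c₁ c₂) : ChordCross c₂ c₁ := by
  unfold ChordCross at *; tauto

lemma assoc_mem {G : Finset (ℕ × ℕ)} {c x : ℕ × ℕ} (h : Assoc G c x) :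
    x = c ∨ x ∈ G := by
  induction h with
  | refl => exact Or.inl rfl
  | tail _ step _ => exact Or.inr step.1

lemma assoc_mem' {G : Finset (ℕ × ℕ)} {c x : ℕ × ℕ} (hc : c ∈ G) (h : Assoc G c x) :
    x ∈ G := by
  rcases assoc_mem h with rfl | hx
  · exact hc
  · exact hx

lemma assoc_symm {G : Finset (ℕ × ℕ)} {c x : ℕ × ℕ} (hc : c ∈ G) (h : Assoc G c x) :
    Assoc G x c := by
  induction h with
  | refl => exact Relation.ReflTransGen.refl
  | @tail b x h step ih =>
      exact Relation.ReflTransGen.head ⟨assoc_mem' hc h, chordCross_symm step.2⟩ ih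

/-- Along one association class, the predicate "first endpoint lies inside
`(p,q)`" is constant, provided no chord of the class crosses `(p,q)` or has
an endpoint at `p` or `q`. -/
lemma comp_side {G : Finset (ℕ × ℕ)} {c₀ : ℕ × ℕ} {p q : ℕ}
    (H : ∀ w, Assoc G c₀ w → w.1 < w.2 ∧ ¬ChordCross (p, q) w ∧
      w.1 ≠ p ∧ w.1 ≠ q ∧ w.2 ≠ p ∧ w.2 ≠ q)
    (hpq : p < q) :
    ∀ x, Assoc G c₀ x → ((p < c₀.1 ∧ c₀.1 < q) ↔ (p < x.1 ∧ x.1 < q)) := by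
  intro x hx
  induction hx with
  | refl => exact Iff.rfl
  | @tail b x h step ih =>
      have hb := H _ h
      have hx2 := H _ (Relation.ReflTransGen.tail h step)
      have hcr := step.2
      unfold ChordCross at hb hx2 hcr
      simp only at hb hx2 hcr
      omega

/-- Endpoint version of `comp_side`. -/
lemma comp_side_end {G : Finset (ℕ × ℕ)} {c₀ : ℕ × ℕ} {p q : ℕ}
    (H : ∀ w, Assoc G c₀ w → w.1 < w.2 ∧ ¬ChordCross (p, q) w ∧
      w.1 ≠ p ∧ w.1 ≠ q ∧ w.2 ≠ p ∧ w.2 ≠ q)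
    (hpq : p < q) {x : ℕ × ℕ} {k : ℕ}
    (hx : Assoc G c₀ x) (hk : x.1 = k ∨ x.2 = k) :
    ((p < c₀.1 ∧ c₀.1 < q) ↔ (p < k ∧ k < q)) := by
  have h1 := comp_side H hpq x hx
  have h2 := H _ hx
  unfold ChordCross at h2
  simp only at h2
  omega

/-- For a perfect matching of `[1,2n]` by chords, the traces of two distinct
association classes (components) do not cross: there are no positions
`a < b < c < d` with `a, c` endpoints of the component of `c₁` and `b, d`
endpoints of the component of `c₂`. -/
theorem stmt_4 (n : ℕ) (G : Finset (ℕ × ℕ))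
    (hvalid : ∀ c ∈ G, 1 ≤ c.1 ∧ c.1 < c.2 ∧ c.2 ≤ 2 * n)
    (hpm : ∀ k, 1 ≤ k → k ≤ 2 * n → ∃! c, c ∈ G ∧ (c.1 = k ∨ c.2 = k))
    (c₁ c₂ : ℕ × ℕ) (h₁ : c₁ ∈ G) (h₂ : c₂ ∈ G)
    (hsep : ¬ Assoc G c₁ c₂) :
    ¬ ∃ a b c d : ℕ, a < b ∧ b < c ∧ c < d ∧
      (∃ x ∈ G, Assoc G c₁ x ∧ (x.1 = a ∨ x.2 = a)) ∧
      (∃ y ∈ G, Assoc G c₂ y ∧ (y.1 = b ∨ y.2 = b)) ∧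
      (∃ x ∈ G, Assoc G c₁ x ∧ (x.1 = c ∨ x.2 = c)) ∧
      (∃ y ∈ G, Assoc G c₂ y ∧ (y.1 = d ∨ y.2 = d)) := by
  -- two chords sharing an endpoint are equal
  have share : ∀ u ∈ G, ∀ v ∈ G, ∀ k : ℕ,
      (u.1 = k ∨ u.2 = k) → (v.1 = k ∨ v.2 = k) → u = v := by
    intro u hu v hv k hku hkv
    have hub := hvalid u hu
    have hk1 : 1 ≤ k := by omega
    have hk2 : k ≤ 2 * n := by omega
    obtain ⟨w, -, huniq⟩ := hpm k hk1 hk2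
    rw [huniq u ⟨hu, hku⟩, huniq v ⟨hv, hkv⟩]
  -- chords in distinct components are distinct
  have hdist : ∀ u v : ℕ × ℕ, Assoc G c₁ u → Assoc G c₂ v → u ≠ v := by
    intro u v hu hv huv
    subst huv
    exact hsep (hu.trans (assoc_symm h₂ hv))
  -- chords in distinct components do not cross
  have hnocr : ∀ u v : ℕ × ℕ, Assoc G c₂ u → Assoc G c₁ v → ¬ChordCross u v := by
    intro u v hu hv hcr
    have hvG : v ∈ G := assoc_mem' h₁ hv
    have : Assoc G c₂ v := hu.tail ⟨hvG, hcr⟩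
    exact hsep (hv.trans (assoc_symm h₂ this))
  rintro ⟨a, b, c, d, hab, hbc, hcd,
    ⟨x, hxG, hx1, hxa⟩, ⟨y, hyG, hy1, hyb⟩, ⟨x', hx'G, hx'1, hx'c⟩, ⟨y', hy'G, hy'1, hy'd⟩⟩
  have hac : a < c := lt_trans hab hbc
  -- Step 1: some chord of the component of c₂ crosses the pair (a, c)
  have hz : ∃ z, Assoc G c₂ z ∧ ChordCross (a, c) z := by
    by_contra h
    push_neg at h
    have H : ∀ w, Assoc G c₂ w → w.1 < w.2 ∧ ¬ChordCross (a, c) w ∧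
        w.1 ≠ a ∧ w.1 ≠ c ∧ w.2 ≠ a ∧ w.2 ≠ c := by
      intro w hw
      have hwG : w ∈ G := assoc_mem' h₂ hw
      have hne_x : w ≠ x := fun e => hdist x w hx1 hw e.symm
      have hne_x' : w ≠ x' := fun e => hdist x' w hx'1 hw e.symm
      refine ⟨(hvalid w hwG).2.1, h w hw, ?_, ?_, ?_, ?_⟩
      · exact fun e => hne_x (share w hwG x hxG a (Or.inl e) hxa)
      · exact fun e => hne_x' (share w hwG x' hx'G c (Or.inl e) hx'c)
      · exact fun e => hne_x (share w hwG x hxG a (Or.inr e) hxa)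
      · exact fun e => hne_x' (share w hwG x' hx'G c (Or.inr e) hx'c)
    have hb' := comp_side_end H hac hy1 hyb
    have hd' := comp_side_end H hac hy'1 hy'd
    omega
  obtain ⟨z, hz2, hzc⟩ := hz
  have hzG : z ∈ G := assoc_mem' h₂ hz2
  have hz12 : z.1 < z.2 := (hvalid z hzG).2.1
  -- Step 2: no chord of the component of c₁ crosses z, so a and c are on the
  -- same side of z — contradicting that z crosses (a, c)
  have H : ∀ w, Assoc G c₁ w → w.1 < w.2 ∧ ¬ChordCross (z.1, z.2) w ∧
      w.1 ≠ z.1 ∧ w.1 ≠ z.2 ∧ w.2 ≠ z.1 ∧ w.2 ≠ z.2 := by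
    intro w hw
    have hwG : w ∈ G := assoc_mem' h₁ hw
    have hne : w ≠ z := fun e => hdist w z hw hz2 e
    refine ⟨(hvalid w hwG).2.1, ?_, ?_, ?_, ?_, ?_⟩
    · have := hnocr z w hz2 hw
      simpa using this
    · exact fun e => hne (share w hwG z hzG z.1 (Or.inl e) (Or.inl rfl))
    · exact fun e => hne (share w hwG z hzG z.2 (Or.inl e) (Or.inr rfl))
    · exact fun e => hne (share w hwG z hzG z.1 (Or.inr e) (Or.inl rfl))
    · exact fun e => hne (share w hwG z hzG z.2 (Or.inr e) (Or.inr rfl))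
  have ha' := comp_side_end H hz12 hx1 hxa
  have hc' := comp_side_end H hz12 hx'1 hx'c
  unfold ChordCross at hzc
  simp only at hzc
  omega
end

section
/- Pairing leaves of a tree: let T be a finite tree and L a set of 2k distinguished vertices of T (the E-blocks). Then there exists a collection of k paths in T, each joining two distinct distinguished vertices, pairing up all 2k distinguished vertices, such that every vertex of the minimal subtree of T spanning L lies on at least one of the k paths. -/
/-!
Choose a pairing `σ` of `L` maximising the total length `∑ x ∈ L, dist x (σ x)`. Suppose a vertex
`v` on the path between `x, y ∈ L` lies on no path `z – σ z`. Then `v` also lies on the path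
`σ x – σ y`, since otherwise `x – σ x – σ y – y` would be a walk from `x` to `y` avoiding `v`.
Re-pairing `{x, σ x}, {y, σ y}` as `{x, y}, {σ x, σ y}` replaces two paths avoiding `v` by two
paths through `v`, and in a tree this strictly increases the total length.
-/

open Finset Equiv

namespace SimpleGraph

variable {V : Type*} {G : SimpleGraph V}

lemma IsAcyclic.eq_of_isPath (hG : G.IsAcyclic) {u v : V} {p q : G.Walk u v}
    (hp : p.IsPath) (hq : q.IsPath) : p = q :=
  Subtype.mk.inj <| hG.subsingleton_path u v |>.elim ⟨p, hp⟩ ⟨q, hq⟩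

lemma IsAcyclic.length_eq_dist_of_isPath (hG : G.IsAcyclic) {u v : V} {p : G.Walk u v}
    (hp : p.IsPath) : p.length = G.dist u v := by
  obtain ⟨q, hq, hqlen⟩ := p.reachable.exists_path_of_dist
  rw [hG.eq_of_isPath hp hq, hqlen]

lemma IsAcyclic.dist_add_dist_eq_of_mem_support [DecidableEq V] (hG : G.IsAcyclic) {u v w : V}
    {p : G.Walk u v} (hp : p.IsPath) (hw : w ∈ p.support) :
    G.dist u w + G.dist w v = G.dist u v := by
  rw [← hG.length_eq_dist_of_isPath (hp.takeUntil hw),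
    ← hG.length_eq_dist_of_isPath (hp.dropUntil hw), ← hG.length_eq_dist_of_isPath hp,
    ← Walk.length_append, p.take_spec hw]

lemma IsTree.dist_lt_dist_add_dist_of_notMem_support (hG : G.IsTree) {u v w : V}
    {p : G.Walk u v} (hp : p.IsPath) (hw : w ∉ p.support) :
    G.dist u v < G.dist u w + G.dist w v := by
  refine lt_of_le_of_ne hG.connected.dist_triangle fun h => hw ?_
  obtain ⟨q, hq⟩ := hG.connected.exists_walk_length_eq_dist u w
  obtain ⟨r, hr⟩ := hG.connected.exists_walk_length_eq_dist w v
  have hqr : (q.append r).IsPath :=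
    (q.append r).isPath_of_length_eq_dist (by rw [Walk.length_append, hq, hr, h])
  rw [hG.isAcyclic.eq_of_isPath hp hqr, Walk.mem_support_append_iff]
  exact Or.inl q.end_mem_support

lemma IsAcyclic.mem_support_of_notMem_support_of_notMem_support [DecidableEq V]
    (hG : G.IsAcyclic) {x y x' y' v : V} {p : G.Walk x y} {q : G.Walk x x'} {r : G.Walk y y'}
    {s : G.Walk x' y'} (hp : p.IsPath) (hv : v ∈ p.support) (hq : v ∉ q.support)
    (hr : v ∉ r.support) : v ∈ s.support := by
  by_contra hs
  have hw : v ∉ (q.append (s.append r.reverse)).support := by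
    simp [Walk.mem_support_append_iff, hq, hr, hs]
  rw [hG.eq_of_isPath hp (q.append (s.append r.reverse)).bypass_isPath] at hv
  exact hw (Walk.support_bypass_subset_support _ hv)

end SimpleGraph

namespace Finset

variable {V : Type*}

/-- The pairing `x ↔ σ x` of `L`; values of `σ` outside `L` are irrelevant. -/
structure IsPairing (L : Finset V) (σ : V → V) : Prop where
  mapsTo : ∀ x ∈ L, σ x ∈ L
  involutive : ∀ x ∈ L, σ (σ x) = x
  ne_self : ∀ x ∈ L, σ x ≠ x

variable {L : Finset V} {σ : V → V}

lemma exists_isPairing_of_card_eq_two_mul {k : ℕ} (hL : L.card = 2 * k) :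
    ∃ σ : V → V, L.IsPairing σ := by
  classical
  obtain ⟨e⟩ : Nonempty (L ≃ Fin k × Bool) := Fintype.card_eq.mp (by simp [hL, mul_comm])
  let flip : L → L := fun x => e.symm ((e x).1, !(e x).2)
  have flip_flip (x : L) : flip (flip x) = x := by simp [flip]
  have flip_ne (x : L) : flip x ≠ x := fun h => by
    simpa [flip, Prod.ext_iff] using congrArg e h
  refine ⟨fun x => if hx : x ∈ L then flip ⟨x, hx⟩ else x, ⟨fun x hx => ?_, fun x hx => ?_,
    fun x hx => ?_⟩⟩
  · simp [hx]
  · simp [hx, flip_flip]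
  · simpa [hx, Subtype.ext_iff] using flip_ne ⟨x, hx⟩

lemma IsPairing.eq_of_apply_eq (hσ : L.IsPairing σ) {a b : V} (ha : a ∈ L) (hb : b ∈ L)
    (h : σ a = σ b) : a = b := by
  rw [← hσ.involutive a ha, h, hσ.involutive b hb]

variable [DecidableEq V]

lemma IsPairing.conj_swap (hσ : L.IsPairing σ) {a b : V} (ha : a ∈ L) (hb : b ∈ L) :
    L.IsPairing (swap a b ∘ σ ∘ swap a b) := by
  have swap_mem : ∀ z ∈ L, swap a b z ∈ L := fun z hz => by
    rcases eq_or_ne z a with rfl | hza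
    · simpa using hb
    rcases eq_or_ne z b with rfl | hzb
    · simpa using ha
    simpa [swap_apply_of_ne_of_ne hza hzb] using hz
  refine ⟨fun z hz => swap_mem _ (hσ.mapsTo _ (swap_mem z hz)), fun z hz => ?_, fun z hz h => ?_⟩
  · simp [swap_apply_self, hσ.involutive _ (swap_mem z hz)]
  · refine hσ.ne_self _ (swap_mem z hz) ?_
    simpa using congrArg (swap a b) h

/-- Conjugating by `swap y (σ x)` re-pairs `{x, σ x}, {y, σ y}` as `{x, y}, {σ x, σ y}`. -/
lemma IsPairing.sum_conj_swap {M : Type*} [AddCommMonoid M] (hσ : L.IsPairing σ) {x y : V}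
    (hx : x ∈ L) (hy : y ∈ L) (hxy : x ≠ y) (hσxy : σ x ≠ y) (d : V → V → M) :
    ∑ z ∈ L, d z ((swap y (σ x) ∘ σ ∘ swap y (σ x)) z)
        + (d x (σ x) + d (σ x) x + d y (σ y) + d (σ y) y)
      = ∑ z ∈ L, d z (σ z) + (d x y + d y x + d (σ x) (σ y) + d (σ y) (σ x)) := by
  set τ := swap y (σ x) ∘ σ ∘ swap y (σ x)
  have hσx := hσ.mapsTo x hx
  have hσy := hσ.mapsTo y hy
  have hσσx := hσ.involutive x hx
  have hσσy := hσ.involutive y hy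
  have hxσx : x ≠ σ x := (hσ.ne_self x hx).symm
  have hyσy : y ≠ σ y := (hσ.ne_self y hy).symm
  have hxσy : x ≠ σ y := fun h => hσxy (by rw [h, hσσy])
  have hσxσy : σ x ≠ σ y := fun h => hxy (hσ.eq_of_apply_eq hx hy h)
  have hτ_rest : ∀ z ∈ L \ {x, y, σ x, σ y}, d z (τ z) = d z (σ z) := by
    intro z hz
    simp only [mem_sdiff, mem_insert, mem_singleton, not_or] at hz
    obtain ⟨hzL, hzx, hzy, hzσx, hzσy⟩ := hz
    have hσzy : σ z ≠ y := fun h => hzσy (by rw [← h, hσ.involutive z hzL])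
    have hσzσx : σ z ≠ σ x := fun h => hzx (hσ.eq_of_apply_eq hzL hx h)
    simp [τ, swap_apply_of_ne_of_ne hzy hzσx, swap_apply_of_ne_of_ne hσzy hσzσx]
  have hA : {x, y, σ x, σ y} ⊆ L := by simp [insert_subset_iff, *]
  rw [← sum_sdiff hA, ← sum_sdiff hA (f := fun z => d z (σ z)), sum_congr rfl hτ_rest]
  rw [sum_insert (by simp [hxy, hxσx, hxσy]), sum_insert (by simp [hσxy.symm, hyσy]),
    sum_insert (by simpa using hσxσy), sum_singleton, sum_insert (by simp [hxy, hxσx, hxσy]),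
    sum_insert (by simp [hσxy.symm, hyσy]), sum_insert (by simpa using hσxσy), sum_singleton]
  simp only [τ, Function.comp_apply, swap_apply_of_ne_of_ne hxy hxσx, swap_apply_right,
    swap_apply_left, hσσx, swap_apply_of_ne_of_ne hyσy.symm hσxσy.symm, hσσy]
  abel

end Finset

namespace SimpleGraph

variable {V : Type*} [DecidableEq V] {G : SimpleGraph V} {L : Finset V} {σ : V → V}

lemma IsTree.exists_mem_support_of_isPairing_of_maximal (hG : G.IsTree) (hσ : L.IsPairing σ)
    (hmax : ∀ τ, L.IsPairing τ → ∑ z ∈ L, G.dist z (τ z) ≤ ∑ z ∈ L, G.dist z (σ z))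
    {x y v : V} (hx : x ∈ L) (hy : y ∈ L) {p : G.Walk x y} (hp : p.IsPath)
    (hv : v ∈ p.support) : ∃ z ∈ L, ∃ q : G.Walk z (σ z), q.IsPath ∧ v ∈ q.support := by
  by_contra! hcov
  obtain ⟨q, hq⟩ := (hG.existsUnique_path x (σ x)).exists
  obtain ⟨r, hr⟩ := (hG.existsUnique_path y (σ y)).exists
  obtain ⟨s, hs⟩ := (hG.existsUnique_path (σ x) (σ y)).exists
  have hvq := hcov x hx q hq
  have hvr := hcov y hy r hr
  have hvs : v ∈ s.support :=
    hG.isAcyclic.mem_support_of_notMem_support_of_notMem_support hp hv hvq hvr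
  have hxy : x ≠ y := by
    rintro rfl
    obtain rfl : v = x := by
      simpa [Walk.nil_iff_support_eq.mp (Walk.isPath_iff_nil.mp hp)] using hv
    exact hvq q.start_mem_support
  have hσxy : σ x ≠ y := by
    rintro rfl
    exact hvq (hG.isAcyclic.eq_of_isPath hq hp ▸ hv)
  have hswap := hσ.sum_conj_swap hx hy hxy hσxy G.dist
  have hle := hmax _ (hσ.conj_swap hy (hσ.mapsTo x hx))
  have hxvy := hG.isAcyclic.dist_add_dist_eq_of_mem_support hp hv
  have hσxvσy := hG.isAcyclic.dist_add_dist_eq_of_mem_support hs hvs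
  have hxvσx := hG.dist_lt_dist_add_dist_of_notMem_support hq hvq
  have hyvσy := hG.dist_lt_dist_add_dist_of_notMem_support hr hvr
  rw [G.dist_comm (u := σ x) (v := x), G.dist_comm (u := σ y) (v := y),
    G.dist_comm (u := y) (v := x), G.dist_comm (u := σ y) (v := σ x)] at hswap
  rw [G.dist_comm (u := v) (v := σ x)] at hxvσx
  rw [G.dist_comm (u := y) (v := v)] at hyvσy
  omega

end SimpleGraph

/-- Pairing leaves of a tree (Proposition 11): if `L` is a set of `2k`
distinguished vertices of a finite tree, then there is a perfect pairing of
`L` (an involution `σ` of `L` without fixed points) such that every vertex of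
the minimal subtree spanning `L` (i.e. every vertex lying on a path between
two `L`-vertices) lies on the path from some `x ∈ L` to `σ x`. -/
theorem stmt_14 {V : Type*} [Fintype V] [DecidableEq V]
    (G : SimpleGraph V) (hT : G.IsTree)
    (L : Finset V) (k : ℕ) (hL : L.card = 2 * k) :
    ∃ σ : V → V,
      (∀ x ∈ L, σ x ∈ L) ∧
      (∀ x ∈ L, σ (σ x) = x) ∧
      (∀ x ∈ L, σ x ≠ x) ∧
      (∀ v : V,
        (∃ x ∈ L, ∃ y ∈ L, ∃ p : G.Walk x y, p.IsPath ∧ v ∈ p.support) →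
        ∃ x ∈ L, ∃ p : G.Walk x (σ x), p.IsPath ∧ v ∈ p.support) := by
  obtain ⟨σ, hσ, hmax⟩ := Set.exists_max_image {σ : V → V | L.IsPairing σ}
    (fun σ => ∑ z ∈ L, G.dist z (σ z)) (Set.toFinite _) (L.exists_isPairing_of_card_eq_two_mul hL)
  refine ⟨σ, hσ.mapsTo, hσ.involutive, hσ.ne_self, ?_⟩
  rintro v ⟨x, hx, y, hy, p, hp, hv⟩
  exact hT.exists_mem_support_of_isPairing_of_maximal hσ hmax hx hy hp hv
end
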